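/- arXiv:1403.2485 — 5 statements merged into one kernel-verified Lean document; each statement's English description precedes it below -/
import Mathlib

section
/- Let F : ℝ → ℝ be strictly convex and differentiable, and let B_F(p:q) := F(p) − F(q) − (p − q)·F'(q). Let x_1, ..., x_n be reals (n ≥ 1) with positive weights w_1, ..., w_n, and let μ := (Σ_l w_l x_l)/(Σ_l w_l) be the weighted mean. Then for every q ∈ ℝ, Σ_l w_l·B_F(x_l : μ) ≤ Σ_l w_l·B_F(x_l : q), with equality if and only if q = μ. In other words, the weighted mean is the unique minimizer of the weighted sum of right-sided Bregman divergences. -/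
/-!
Bregman's three-point identity turns the weighted sum of divergences to `q` into the weighted sum
of divergences to the mean `μ` plus `(∑ w) · B_F(μ : q)`, because the cross term is a multiple of
`∑ w (x - μ) = 0`. Strict convexity makes `B_F(μ : q)` positive unless `q = μ`.
-/

/-- The Bregman divergence `B_F(p:q) = F(p) − F(q) − (p − q)·F'(q)`. -/
noncomputable def breg (F : ℝ → ℝ) (p q : ℝ) : ℝ :=
  F p - F q - (p - q) * deriv F q

open Finset

lemma breg_self (F : ℝ → ℝ) (p : ℝ) : breg F p p = 0 := by
  simp [breg]

lemma breg_eq_breg_add_breg_add (F : ℝ → ℝ) (p q r : ℝ) :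
    breg F p q = breg F p r + breg F r q + (p - r) * (deriv F r - deriv F q) := by
  simp only [breg]
  ring

lemma StrictConvexOn.breg_pos {F : ℝ → ℝ} {s : Set ℝ} (hF : StrictConvexOn ℝ s F) {p q : ℝ}
    (hp : p ∈ s) (hq : q ∈ s) (hFq : DifferentiableAt ℝ F q) (hpq : p ≠ q) :
    0 < breg F p q := by
  rw [breg, sub_sub, sub_pos]
  rcases hpq.lt_or_gt with hlt | hgt
  · have hslope := hF.slope_lt_deriv hp hq hlt hFq
    rw [slope_def_field, div_lt_iff₀ (sub_pos.2 hlt)] at hslope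
    linarith
  · have hslope := hF.deriv_lt_slope hq hp hgt hFq
    rw [slope_def_field, lt_div_iff₀ (sub_pos.2 hgt)] at hslope
    linarith

lemma StrictConvexOn.breg_eq_zero_iff {F : ℝ → ℝ} {s : Set ℝ} (hF : StrictConvexOn ℝ s F)
    {p q : ℝ} (hp : p ∈ s) (hq : q ∈ s) (hFq : DifferentiableAt ℝ F q) :
    breg F p q = 0 ↔ p = q := by
  refine ⟨fun h => ?_, fun h => h ▸ breg_self F p⟩
  by_contra hpq
  exact (hF.breg_pos hp hq hFq hpq).ne' h

lemma StrictConvexOn.breg_nonneg {F : ℝ → ℝ} {s : Set ℝ} (hF : StrictConvexOn ℝ s F) {p q : ℝ}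
    (hp : p ∈ s) (hq : q ∈ s) (hFq : DifferentiableAt ℝ F q) : 0 ≤ breg F p q := by
  rcases eq_or_ne p q with rfl | hpq
  · exact (breg_self F p).ge
  · exact (hF.breg_pos hp hq hFq hpq).le

lemma sum_mul_breg_eq_sum_mul_breg_add {ι : Type*} (s : Finset ι) (F : ℝ → ℝ) (x w : ι → ℝ)
    {μ : ℝ} (hμ : ∑ i ∈ s, w i * x i = (∑ i ∈ s, w i) * μ) (q : ℝ) :
    ∑ i ∈ s, w i * breg F (x i) q
      = ∑ i ∈ s, w i * breg F (x i) μ + (∑ i ∈ s, w i) * breg F μ q := by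
  have hcross : ∑ i ∈ s, w i * (x i - μ) = 0 := by
    simp only [mul_sub, sum_sub_distrib, hμ, ← sum_mul, sub_self]
  calc ∑ i ∈ s, w i * breg F (x i) q
      = ∑ i ∈ s, (w i * breg F (x i) μ + w i * breg F μ q
          + w i * (x i - μ) * (deriv F μ - deriv F q)) := by
        refine sum_congr rfl fun i _ => ?_
        rw [breg_eq_breg_add_breg_add F (x i) q μ]
        ring
    _ = ∑ i ∈ s, w i * breg F (x i) μ + (∑ i ∈ s, w i) * breg F μ q := by
        rw [sum_add_distrib, sum_add_distrib, ← sum_mul, ← sum_mul, hcross, zero_mul, add_zero]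

theorem stmt5 (F : ℝ → ℝ) (hF : StrictConvexOn ℝ Set.univ F)
    (hFd : Differentiable ℝ F)
    (n : ℕ) (hn : 1 ≤ n) (x w : Fin n → ℝ) (hw : ∀ l, 0 < w l)
    (μ : ℝ) (hμ : μ = (∑ l, w l * x l) / (∑ l, w l)) :
    ∀ q : ℝ,
      (∑ l, w l * breg F (x l) μ) ≤ (∑ l, w l * breg F (x l) q) ∧
      ((∑ l, w l * breg F (x l) μ) = (∑ l, w l * breg F (x l) q) ↔ q = μ) := by
  intro q
  have hW : 0 < ∑ l, w l := sum_pos (fun l _ => hw l) (univ_nonempty_iff.2 ⟨⟨0, hn⟩⟩)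
  have hsum : ∑ l, w l * x l = (∑ l, w l) * μ := by
    rw [hμ, mul_div_cancel₀ _ hW.ne']
  rw [sum_mul_breg_eq_sum_mul_breg_add univ F x w hsum q, left_eq_add, mul_eq_zero,
    or_iff_right hW.ne', hF.breg_eq_zero_iff (Set.mem_univ μ) (Set.mem_univ q) (hFd q), eq_comm]
  exact ⟨le_add_of_nonneg_right (mul_nonneg hW.le (hF.breg_nonneg (Set.mem_univ μ) (Set.mem_univ q) (hFd q))),
    Iff.rfl⟩
end

section
/- Let F : ℝ → ℝ be strictly convex and differentiable, and let B_F(p:q) := F(p) − F(q) − (p − q)·F'(q). Let p_1, ..., p_k ∈ ℝ be prototypes with additive weights a_1, ..., a_k ∈ ℝ. Then for each j, the additively-weighted Bregman Voronoi cell V_j := {x ∈ ℝ : B_F(x:p_j) + a_j ≤ B_F(x:p_l) + a_l for all l ∈ {1,...,k}} is order-connected (an interval). -/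
open Set

theorem ordConnected_setOf_mul_add_nonpos {𝕜 : Type*} [Field 𝕜] [LinearOrder 𝕜]
    [IsStrictOrderedRing 𝕜] (c d : 𝕜) : OrdConnected {x : 𝕜 | c * x + d ≤ 0} := by
  refine ⟨fun x hx z hz y ⟨hxy, hyz⟩ => ?_⟩
  simp only [mem_ofPred_eq] at hx hz ⊢
  rcases le_total 0 c with hc | hc
  · nlinarith [mul_le_mul_of_nonneg_left hyz hc]
  · nlinarith [mul_le_mul_of_nonpos_left hxy hc]

theorem breg_sub_breg (F : ℝ → ℝ) (x q r : ℝ) :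
    breg F x q - breg F x r =
      (deriv F r - deriv F q) * x + (F r - F q + q * deriv F q - r * deriv F r) := by
  unfold breg
  ring

theorem ordConnected_setOf_breg_add_le (F : ℝ → ℝ) (q r a b : ℝ) :
    OrdConnected {x : ℝ | breg F x q + a ≤ breg F x r + b} := by
  have hset : {x : ℝ | breg F x q + a ≤ breg F x r + b} =
      {x | (deriv F r - deriv F q) * x + (F r - F q + q * deriv F q - r * deriv F r + a - b)
        ≤ 0} := by
    ext x
    simp only [mem_ofPred_eq]
    constructor <;> intro h <;> linarith [breg_sub_breg F x q r]
  rw [hset]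
  exact ordConnected_setOf_mul_add_nonpos _ _

theorem stmt9_general (F : ℝ → ℝ)
    (k : ℕ) (p a : Fin k → ℝ) (j : Fin k) :
    Set.OrdConnected
      {x : ℝ | ∀ l : Fin k, breg F x (p j) + a j ≤ breg F x (p l) + a l} := by
  rw [ofPred_forall]
  exact ordConnected_iInter fun l => ordConnected_setOf_breg_add_le F _ _ _ _

theorem stmt9 (F : ℝ → ℝ) (hF : StrictConvexOn ℝ Set.univ F)
    (hFd : Differentiable ℝ F)
    (k : ℕ) (p a : Fin k → ℝ) (j : Fin k) :
    Set.OrdConnected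
      {x : ℝ | ∀ l : Fin k, breg F x (p j) + a j ≤ breg F x (p l) + a l} :=
  stmt9_general F k p a j
end

section
/- Let d : ℝ × ℝ → ℝ be a dissimilarity function such that for every pair of prototypes p, q ∈ ℝ the dominance region {x ∈ ℝ : d(x,p) ≤ d(x,q)} is order-connected. Let X be a finite set of reals and let p_1, ..., p_k ∈ ℝ be any k prototypes. Then there exists a partition of X into k (possibly empty) clusters C_1, ..., C_k such that each C_j is of the form X ∩ I_j for some order-connected set I_j ⊆ ℝ, and Σ_{j=1}^k Σ_{x ∈ C_j} d(x, p_j) = Σ_{x ∈ X} min_{j ∈ {1,...,k}} d(x, p_j). In particular, under this Voronoi-connectedness condition, an optimal center-based clustering can always be realized by contiguous interval clusters. -/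
/-!
The region `R j` where prototype `j` is optimal is an intersection of dominance regions, hence
order-connected. Send each point of `X` to the prototype optimal there whose region reaches
furthest to the right within `X` (ties broken by the index). If `x ≤ y ≤ z` are points of `X` with
`x` and `z` sent to `j`, then `j` is optimal at `y`, and any prototype `i` optimal at `y` but not
at `z` has all its optimal points of `X` below `z`, so it reaches less far than `j`. Hence every
cluster is a contiguous block of `X`, and every point pays its minimal dissimilarity.
-/

open Finset

theorem Set.exists_ordConnected_eq_inter_of_between {α : Type*} [PartialOrder α] {C X : Set α}
    (hCX : C ⊆ X) (hC : ∀ x ∈ C, ∀ z ∈ C, ∀ y ∈ X, x ≤ y → y ≤ z → y ∈ C) :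
    ∃ I : Set α, I.OrdConnected ∧ C = X ∩ I := by
  refine ⟨upperClosure C ∩ lowerClosure C,
    (upperClosure C).upper.ordConnected.inter (lowerClosure C).lower.ordConnected, ?_⟩
  ext y
  simp only [Set.mem_inter_iff, SetLike.mem_coe, mem_upperClosure, mem_lowerClosure]
  constructor
  · exact fun hy => ⟨hCX hy, ⟨y, hy, le_rfl⟩, ⟨y, hy, le_rfl⟩⟩
  · rintro ⟨hyX, ⟨x, hx, hxy⟩, ⟨z, hz, hyz⟩⟩
    exact hC x hx z hz y hyX hxy hyz

theorem Finset.sum_sum_eq_sum_of_existsUnique {α ι M : Type*} [Fintype ι] [AddCommMonoid M]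
    {X : Finset α} {C : ι → Finset α} (hCX : ∀ j, C j ⊆ X) (hC : ∀ x ∈ X, ∃! j, x ∈ C j)
    (f : α → M) : ∑ j, ∑ x ∈ C j, f x = ∑ x ∈ X, f x := by
  classical
  have hdisj : ((univ : Finset ι) : Set ι).PairwiseDisjoint C := by
    intro i _ j _ hij
    refine disjoint_left.2 fun x hxi hxj => hij ?_
    exact (hC x (hCX i hxi)).unique hxi hxj
  have hX : univ.biUnion C = X := by
    ext x
    simp only [mem_biUnion, mem_univ, true_and]
    exact ⟨fun ⟨j, hj⟩ => hCX j hj, fun hx => (hC x hx).exists⟩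
  rw [← sum_biUnion hdisj, hX]

section GreedyCell

open scoped Classical

variable {α ι : Type*} [LinearOrder α] (X : Finset α) (R : ι → Set α)

/-- The index `j` is recorded as a tie-breaker, making `rightReach X R` injective. -/
noncomputable def rightReach (j : ι) : Lex (WithBot α × ι) :=
  toLex ({x ∈ X | x ∈ R j}.max, j)

theorem rightReach_injective : Function.Injective (rightReach X R) := fun _ _ h =>
  (Prod.ext_iff.1 (toLex.injective h)).2

variable [LinearOrder ι]

noncomputable def greedyCell (j : ι) : Finset α :=
  {x ∈ X | x ∈ R j ∧ ∀ i, x ∈ R i → rightReach X R i ≤ rightReach X R j}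

variable {X R}

theorem greedyCell_subset (j : ι) : greedyCell X R j ⊆ X := filter_subset _ _

theorem mem_of_mem_greedyCell {j : ι} {x : α} (hx : x ∈ greedyCell X R j) : x ∈ R j :=
  (mem_filter.1 hx).2.1

theorem existsUnique_mem_greedyCell [Finite ι] {x : α} (hxX : x ∈ X) (hx : ∃ j, x ∈ R j) :
    ∃! j, x ∈ greedyCell X R j := by
  obtain ⟨j, hj, hmax⟩ := Set.exists_max_image {i | x ∈ R i} (rightReach X R) (Set.toFinite _) hx
  refine ⟨j, mem_filter.2 ⟨hxX, hj, hmax⟩, fun i hi => ?_⟩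
  obtain ⟨-, hi, himax⟩ := mem_filter.1 hi
  exact rightReach_injective X R (le_antisymm (hmax i hi) (himax j hj))

theorem rightReach_lt_of_notMem {i j : ι} (hRi : (R i).OrdConnected) {y z : α}
    (hy : y ∈ R i) (hyz : y ≤ z) (hzX : z ∈ X) (hzj : z ∈ R j) (hzi : z ∉ R i) :
    rightReach X R i < rightReach X R j := by
  have hbelow : ∀ w ∈ {x ∈ X | x ∈ R i}, w < z := by
    intro w hw
    by_contra! hzw
    exact hzi (hRi.out hy (mem_filter.1 hw).2 ⟨hyz, hzw⟩)
  refine Prod.Lex.toLex_lt_toLex.2 (Or.inl ?_)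
  calc {x ∈ X | x ∈ R i}.max < z := by
        rw [max_eq_sup_withBot, Finset.sup_lt_iff (WithBot.bot_lt_coe z)]
        exact fun w hw => WithBot.coe_lt_coe.2 (hbelow w hw)
    _ ≤ {x ∈ X | x ∈ R j}.max := le_max (mem_filter.2 ⟨hzX, hzj⟩)

theorem mem_greedyCell_of_between (hR : ∀ i, (R i).OrdConnected) {j : ι} {x y z : α}
    (hx : x ∈ greedyCell X R j) (hz : z ∈ greedyCell X R j) (hyX : y ∈ X)
    (hxy : x ≤ y) (hyz : y ≤ z) : y ∈ greedyCell X R j := by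
  obtain ⟨-, hxj, -⟩ := mem_filter.1 hx
  obtain ⟨hzX, hzj, hzmax⟩ := mem_filter.1 hz
  refine mem_filter.2 ⟨hyX, (hR j).out hxj hzj ⟨hxy, hyz⟩, fun i hyi => ?_⟩
  by_cases hzi : z ∈ R i
  · exact hzmax i hzi
  · exact (rightReach_lt_of_notMem (hR i) hyi hyz hzX hzj hzi).le

theorem exists_ordConnected_greedyCell_eq_inter (hR : ∀ i, (R i).OrdConnected) (j : ι) :
    ∃ I : Set α, I.OrdConnected ∧ (greedyCell X R j : Set α) = (X : Set α) ∩ I :=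
  Set.exists_ordConnected_eq_inter_of_between (coe_subset.2 (greedyCell_subset j))
    fun _ hx _ hz _ hy => mem_greedyCell_of_between hR hx hz hy

end GreedyCell

theorem stmt10 (d : ℝ → ℝ → ℝ)
    (hd : ∀ p q : ℝ, Set.OrdConnected {x : ℝ | d x p ≤ d x q})
    (X : Finset ℝ) (k : ℕ) (hk : 1 ≤ k) (p : Fin k → ℝ) :
    ∃ C : Fin k → Finset ℝ,
      (∀ j, C j ⊆ X) ∧
      (∀ x ∈ X, ∃! j : Fin k, x ∈ C j) ∧
      (∀ j, ∃ I : Set ℝ, I.OrdConnected ∧ (C j : Set ℝ) = (X : Set ℝ) ∩ I) ∧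
      (∑ j : Fin k, ∑ x ∈ C j, d x (p j)) = ∑ x ∈ X, ⨅ l : Fin k, d x (p l) := by
  have : Nonempty (Fin k) := ⟨⟨0, hk⟩⟩
  set R : Fin k → Set ℝ := fun j => ⋂ l, {x | d x (p j) ≤ d x (p l)}
  have hR : ∀ j, (R j).OrdConnected := fun j => Set.ordConnected_iInter fun l => hd _ _
  have hcov : ∀ x ∈ X, ∃ j, x ∈ R j := fun x _ => by
    obtain ⟨j, -, hj⟩ := exists_min_image univ (fun l => d x (p l)) univ_nonempty
    exact ⟨j, Set.mem_iInter.2 fun l => hj l (mem_univ l)⟩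
  have hpart : ∀ x ∈ X, ∃! j, x ∈ greedyCell X R j := fun x hx =>
    existsUnique_mem_greedyCell hx (hcov x hx)
  refine ⟨greedyCell X R, greedyCell_subset, hpart,
    exists_ordConnected_greedyCell_eq_inter hR, ?_⟩
  calc ∑ j, ∑ x ∈ greedyCell X R j, d x (p j)
      = ∑ j, ∑ x ∈ greedyCell X R j, ⨅ l, d x (p l) := by
        refine sum_congr rfl fun j _ => sum_congr rfl fun x hx => ?_
        have hopt : x ∈ R j := mem_of_mem_greedyCell hx
        exact le_antisymm (le_ciInf (Set.mem_iInter.1 hopt))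
          (ciInf_le (Set.finite_range _).bddBelow j)
    _ = ∑ x ∈ X, ⨅ l, d x (p l) := sum_sum_eq_sum_of_existsUnique greedyCell_subset hpart _
end

section
/- Let ψ : ℝ → ℝ be strictly convex and differentiable, and let F : ℝ → ℝ be differentiable and satisfy F(ψ'(θ)) = θ·ψ'(θ) − ψ(θ) and F'(ψ'(θ)) = θ for all θ ∈ ℝ. Let B_F(p:q) := F(p) − F(q) − (p − q)·F'(q). Then for every x ∈ ℝ and all parameters θ_1, θ_2 ∈ ℝ: θ_1·x − ψ(θ_1) ≥ θ_2·x − ψ(θ_2) if and only if B_F(x : ψ'(θ_1)) ≤ B_F(x : ψ'(θ_2)). That is, maximizing the exponential-family log-likelihood at x over parameters is equivalent to minimizing the Bregman divergence from x to the corresponding expectation parameters. -/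
lemma breg_deriv_eq_sub (ψ F : ℝ → ℝ) {θ : ℝ}
    (hdual₁ : F (deriv ψ θ) = θ * deriv ψ θ - ψ θ) (hdual₂ : deriv F (deriv ψ θ) = θ)
    (x : ℝ) : breg F x (deriv ψ θ) = F x - (θ * x - ψ θ) := by
  rw [breg, hdual₁, hdual₂]
  ring

theorem stmt12_general (ψ F : ℝ → ℝ)
    (hdual₁ : ∀ θ : ℝ, F (deriv ψ θ) = θ * deriv ψ θ - ψ θ)
    (hdual₂ : ∀ θ : ℝ, deriv F (deriv ψ θ) = θ) :
    ∀ x θ₁ θ₂ : ℝ,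
      (θ₂ * x - ψ θ₂ ≤ θ₁ * x - ψ θ₁ ↔
        breg F x (deriv ψ θ₁) ≤ breg F x (deriv ψ θ₂)) := by
  intro x θ₁ θ₂
  rw [breg_deriv_eq_sub ψ F (hdual₁ θ₁) (hdual₂ θ₁), breg_deriv_eq_sub ψ F (hdual₁ θ₂) (hdual₂ θ₂),
    sub_le_sub_iff_left]

theorem stmt12 (ψ F : ℝ → ℝ)
    (hψ : StrictConvexOn ℝ Set.univ ψ) (hψd : Differentiable ℝ ψ)
    (hFd : Differentiable ℝ F)
    (hdual₁ : ∀ θ : ℝ, F (deriv ψ θ) = θ * deriv ψ θ - ψ θ)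
    (hdual₂ : ∀ θ : ℝ, deriv F (deriv ψ θ) = θ) :
    ∀ x θ₁ θ₂ : ℝ,
      (θ₂ * x - ψ θ₂ ≤ θ₁ * x - ψ θ₁ ↔
        breg F x (deriv ψ θ₁) ≤ breg F x (deriv ψ θ₂)) :=
  stmt12_general ψ F hdual₁ hdual₂
end

section
/- Let F : ℝ → ℝ be twice continuously differentiable and strictly convex, and let B_F(p:q) := F(p) − F(q) − (p − q)·F'(q). If B_F is symmetric, i.e., B_F(p:q) = B_F(q:p) for all p, q ∈ ℝ, then F'' is constant, and consequently there exist λ > 0 and a, b ∈ ℝ with F(x) = λx² + ax + b for all x, i.e., B_F(p:q) = λ(p−q)² is a rescaled squared Euclidean distance. -/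
theorem two_mul_sub_eq_of_breg_comm {F : ℝ → ℝ} {p q : ℝ} (h : breg F p q = breg F q p) :
    2 * (F p - F q) = (p - q) * (deriv F p + deriv F q) := by
  unfold breg at h
  linarith

section Trapezoid

variable {F : ℝ → ℝ} (hF : Differentiable ℝ F) (hF' : Differentiable ℝ (deriv F))
  (htrap : ∀ p q, 2 * (F p - F q) = (p - q) * (deriv F p + deriv F q))
include hF hF' htrap

theorem deriv_sub_deriv_eq_mul_deriv_deriv (p q : ℝ) :
    deriv F p - deriv F q = (p - q) * deriv (deriv F) p := by
  have hL : HasDerivAt (fun x => 2 * (F x - F q)) (2 * deriv F p) p :=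
    ((hF p).hasDerivAt.sub_const _).const_mul 2
  have hR : HasDerivAt (fun x => (x - q) * (deriv F x + deriv F q))
      (1 * (deriv F p + deriv F q) + (p - q) * deriv (deriv F) p) p :=
    ((hasDerivAt_id p).sub_const q).mul ((hF' p).hasDerivAt.add_const _)
  simp only [htrap _ q] at hL
  linarith [hL.unique hR]

theorem deriv_deriv_eq (x y : ℝ) : deriv (deriv F) x = deriv (deriv F) y := by
  rcases eq_or_ne x y with rfl | hxy
  · rfl
  have hx := deriv_sub_deriv_eq_mul_deriv_deriv hF hF' htrap x y
  have hy := deriv_sub_deriv_eq_mul_deriv_deriv hF hF' htrap y x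
  exact mul_left_cancel₀ (sub_ne_zero.mpr hxy) (by linarith)

theorem deriv_eq_affine (x : ℝ) : deriv F x = deriv F 0 + deriv (deriv F) 0 * x := by
  have h := deriv_sub_deriv_eq_mul_deriv_deriv hF hF' htrap x 0
  rw [deriv_deriv_eq hF hF' htrap x 0] at h
  linarith

theorem eq_quadratic (x : ℝ) :
    F x = deriv (deriv F) 0 / 2 * x ^ 2 + deriv F 0 * x + F 0 := by
  have h := htrap x 0
  rw [deriv_eq_affine hF hF' htrap x] at h
  linarith

end Trapezoid

theorem pos_of_strictConvexOn_quadratic {lam a b : ℝ}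
    (h : StrictConvexOn ℝ Set.univ fun x : ℝ => lam * x ^ 2 + a * x + b) : 0 < lam := by
  have hmid := h.2 (Set.mem_univ 0) (Set.mem_univ 1) zero_ne_one
    (by norm_num : (0 : ℝ) < 1 / 2) (by norm_num : (0 : ℝ) < 1 / 2) (by norm_num)
  norm_num at hmid
  linarith

theorem stmt16 (F : ℝ → ℝ) (hF2 : ContDiff ℝ 2 F)
    (hF : StrictConvexOn ℝ Set.univ F)
    (hsym : ∀ p q : ℝ, breg F p q = breg F q p) :
    (∀ x y : ℝ, deriv (deriv F) x = deriv (deriv F) y) ∧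
    ∃ lam : ℝ, 0 < lam ∧ ∃ a b : ℝ,
      (∀ x : ℝ, F x = lam * x ^ 2 + a * x + b) ∧
      (∀ p q : ℝ, breg F p q = lam * (p - q) ^ 2) := by
  have hd1 : Differentiable ℝ F := hF2.differentiable (by norm_num)
  have hd2 : Differentiable ℝ (deriv F) := hF2.differentiable_deriv_two
  have htrap := fun p q => two_mul_sub_eq_of_breg_comm (hsym p q)
  have hquad := eq_quadratic hd1 hd2 htrap
  have hpos := pos_of_strictConvexOn_quadratic (funext hquad ▸ hF)
  refine ⟨deriv_deriv_eq hd1 hd2 htrap, _, hpos, deriv F 0, F 0, hquad, fun p q => ?_⟩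
  rw [breg, hquad p, hquad q, deriv_eq_affine hd1 hd2 htrap q]
  ring
end
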